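/- Let X be a nonempty finite set, m and ℓ natural numbers, D a probability distribution on X, δ > 0, T : (X × {0,1})^m × {0,1}^ℓ → {0,1}, f, f' : X → {0,1}, and f̃ : X → [0,1]. Suppose that for every one-way restriction R in R(T), both |E_{x∼D}[R(x)·(f(x) − f̃(x))]| ≤ δ and |E_{x∼D}[R(x)·(f'(x) − f̃(x))]| ≤ δ. Then |E[T(x, f(x), r)] − E[T(x, f'(x), r)]| ≤ 4mδ, where x_1, ..., x_m are drawn i.i.d. from D, the label vectors are (f(x_1), ..., f(x_m)) and (f'(x_1), ..., f'(x_m)) respectively, and r is uniform on {0,1}^ℓ independent of x. -/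
import Mathlib

open Finset

private lemma bool_split {m : ℕ} (k : Fin m) (y : Fin m → Bool) (b b' : Bool)
    (φ : (Fin m → Bool) → ℝ) :
    φ (Function.update y k b) - φ (Function.update y k b') =
      ((if b then (1:ℝ) else 0) - (if b' then (1:ℝ) else 0)) *
        (φ (Function.update y k true) - φ (Function.update y k false)) := by
  cases b <;> cases b' <;> simp

private lemma key_step {X : Type*} [Fintype X] [DecidableEq X] [Nonempty X]
    (m l : ℕ) (D : X → ℝ) (hD0 : ∀ x, 0 ≤ D x) (hD1 : ∑ x, D x = 1)
    (δ : ℝ)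
    (T : (Fin m → X) → (Fin m → Bool) → (Fin l → Bool) → Bool)
    (f f' : X → Bool) (ftil : X → ℝ)
    (hregf : ∀ (i : Fin m) (xs : Fin m → X) (y : Fin m → Bool) (r : Fin l → Bool),
      |∑ x, D x * ((if T (Function.update xs i x) y r then (1 : ℝ) else 0) *
        ((if f x then (1 : ℝ) else 0) - ftil x))| ≤ δ)
    (hregf' : ∀ (i : Fin m) (xs : Fin m → X) (y : Fin m → Bool) (r : Fin l → Bool),
      |∑ x, D x * ((if T (Function.update xs i x) y r then (1 : ℝ) else 0) *
        ((if f' x then (1 : ℝ) else 0) - ftil x))| ≤ δ)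
    (k : Fin m) (g g' : Fin m → X → Bool)
    (hgg : ∀ j, j ≠ k → g j = g' j) (hgk : g k = f) (hg'k : g' k = f') :
    |(∑ x : Fin m → X, (∏ i, D (x i)) *
        (((1 : ℝ) / 2 ^ l) * ∑ r : Fin l → Bool,
          (if T x (fun i => g i (x i)) r then (1 : ℝ) else 0))) -
      (∑ x : Fin m → X, (∏ i, D (x i)) *
        (((1 : ℝ) / 2 ^ l) * ∑ r : Fin l → Bool,
          (if T x (fun i => g' i (x i)) r then (1 : ℝ) else 0)))| ≤ 4 * δ := by
  classical
  set u : ℝ := (1 : ℝ) / 2 ^ l with hu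
  have hu0 : 0 ≤ u := by positivity
  -- pointwise decomposition of the difference of indicators
  have hpt : ∀ (x : Fin m → X) (r : Fin l → Bool),
      (if T x (fun i => g i (x i)) r then (1:ℝ) else 0) -
        (if T x (fun i => g' i (x i)) r then (1:ℝ) else 0)
      = ((if f (x k) then (1:ℝ) else 0) - (if f' (x k) then (1:ℝ) else 0)) *
        ((if T x (Function.update (fun i => g i (x i)) k true) r then (1:ℝ) else 0)
         - (if T x (Function.update (fun i => g i (x i)) k false) r then (1:ℝ) else 0)) := by
    intro x r
    have h1 : Function.update (fun i => g i (x i)) k (f (x k)) = (fun i => g i (x i)) := by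
      rw [← hgk]; exact Function.update_eq_self _ _
    have h2 : Function.update (fun i => g i (x i)) k (f' (x k)) = (fun i => g' i (x i)) := by
      funext j
      rcases eq_or_ne j k with h | h
      · subst h; simp [hg'k]
      · simp [Function.update, h, congrFun (hgg j h) (x j)]
    have := bool_split k (fun i => g i (x i)) (f (x k)) (f' (x k))
      (fun y' => if T x y' r then (1:ℝ) else 0)
    rw [h1, h2] at this
    exact this
  -- notation for the "rest" of the sample
  set XS : ({ j // j ≠ k } → X) → (Fin m → X) :=
    fun xs => (Equiv.funSplitAt k X).symm (Classical.arbitrary X, xs) with hXS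
  have hv : ∀ (a : X) (xs : { j // j ≠ k } → X),
      (Equiv.funSplitAt k X).symm (a, xs) = Function.update (XS xs) k a := by
    intro a xs
    funext j
    rcases eq_or_ne j k with h | h
    · subst h
      simp [Equiv.funSplitAt, Equiv.piSplitAt, Function.update]
    · simp [Equiv.funSplitAt, Equiv.piSplitAt, Function.update, h, XS]
  have hXSne : ∀ (xs : { j // j ≠ k } → X) (j : Fin m) (h : j ≠ k), XS xs j = xs ⟨j, h⟩ := by
    intro xs j h
    simp [XS, Equiv.funSplitAt, Equiv.piSplitAt, h]
  -- splitting of the product weight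
  have hprodsplit : ∀ x : Fin m → X,
      (∏ i, D (x i)) = D (x k) * ∏ j : { j // j ≠ k }, D (x j) := by
    intro x
    rw [← Finset.mul_prod_erase Finset.univ (fun i => D (x i)) (Finset.mem_univ k)]
    congr 1
    exact (Finset.prod_subtype (p := fun j => j ≠ k) (Finset.univ.erase k) (by simp)
      (fun i => D (x i)))
  -- the difference equals a sum over (rest, sampled coordinate)
  have hsplit : (∑ x : Fin m → X, (∏ i, D (x i)) *
        (u * ∑ r : Fin l → Bool,
          (if T x (fun i => g i (x i)) r then (1 : ℝ) else 0))) -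
      (∑ x : Fin m → X, (∏ i, D (x i)) *
        (u * ∑ r : Fin l → Bool,
          (if T x (fun i => g' i (x i)) r then (1 : ℝ) else 0)))
      = ∑ xs : { j // j ≠ k } → X, ∑ a : X,
          (D a * ∏ j : { j // j ≠ k }, D (xs j)) *
          (u * ∑ r : Fin l → Bool,
            ((if f a then (1:ℝ) else 0) - (if f' a then (1:ℝ) else 0)) *
            ((if T (Function.update (XS xs) k a)
                 (Function.update (fun i => g i (XS xs i)) k true) r then (1:ℝ) else 0) -
             (if T (Function.update (XS xs) k a)
                 (Function.update (fun i => g i (XS xs i)) k false) r then (1:ℝ) else 0))) := by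
    rw [← Finset.sum_sub_distrib]
    have step1 : ∀ x : Fin m → X,
        (∏ i, D (x i)) * (u * ∑ r : Fin l → Bool,
            (if T x (fun i => g i (x i)) r then (1 : ℝ) else 0)) -
        (∏ i, D (x i)) * (u * ∑ r : Fin l → Bool,
            (if T x (fun i => g' i (x i)) r then (1 : ℝ) else 0))
        = (∏ i, D (x i)) * (u * ∑ r : Fin l → Bool,
            ((if f (x k) then (1:ℝ) else 0) - (if f' (x k) then (1:ℝ) else 0)) *
            ((if T x (Function.update (fun i => g i (x i)) k true) r then (1:ℝ) else 0)
             - (if T x (Function.update (fun i => g i (x i)) k false) r then (1:ℝ) else 0))) := by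
      intro x
      rw [← mul_sub, ← mul_sub, ← Finset.sum_sub_distrib]
      congr 1
      congr 1
      exact Finset.sum_congr rfl fun r _ => hpt x r
    calc
      (∑ x : Fin m → X,
          ((∏ i, D (x i)) * (u * ∑ r : Fin l → Bool,
            (if T x (fun i => g i (x i)) r then (1 : ℝ) else 0)) -
           (∏ i, D (x i)) * (u * ∑ r : Fin l → Bool,
            (if T x (fun i => g' i (x i)) r then (1 : ℝ) else 0))))
        = ∑ x : Fin m → X, (∏ i, D (x i)) * (u * ∑ r : Fin l → Bool,
            ((if f (x k) then (1:ℝ) else 0) - (if f' (x k) then (1:ℝ) else 0)) *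
            ((if T x (Function.update (fun i => g i (x i)) k true) r then (1:ℝ) else 0)
             - (if T x (Function.update (fun i => g i (x i)) k false) r then (1:ℝ) else 0))) :=
          Finset.sum_congr rfl fun x _ => step1 x
      _ = ∑ p : X × ({ j // j ≠ k } → X),
            (D p.1 * ∏ j : { j // j ≠ k }, D (p.2 j)) *
            (u * ∑ r : Fin l → Bool,
              ((if f p.1 then (1:ℝ) else 0) - (if f' p.1 then (1:ℝ) else 0)) *
              ((if T (Function.update (XS p.2) k p.1)
                   (Function.update (fun i => g i (XS p.2 i)) k true) r then (1:ℝ) else 0) -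
               (if T (Function.update (XS p.2) k p.1)
                   (Function.update (fun i => g i (XS p.2 i)) k false) r then (1:ℝ) else 0))) := by
          apply Fintype.sum_equiv (Equiv.funSplitAt k X)
          intro x
          have hx : Function.update (XS (fun j => x j)) k (x k) = x := by
            rw [← hv]
            exact (Equiv.funSplitAt k X).symm_apply_apply x
          have hlab : ∀ c : Bool,
              Function.update (fun i => g i (XS (fun j => x j) i)) k c
                = Function.update (fun i => g i (x i)) k c := by
            intro c
            funext j
            rcases eq_or_ne j k with h | h
            · subst h; simp
            · simp [Function.update, h, hXSne (fun j => x j) j h]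
          simp only [Equiv.funSplitAt, Equiv.piSplitAt, Equiv.coe_fn_mk]
          rw [hprodsplit x]
          congr 2
          apply Finset.sum_congr rfl
          intro r _
          rw [hx, hlab true, hlab false]
      _ = _ := by
          rw [Fintype.sum_prod_type]
          exact Finset.sum_comm
  rw [hsplit]
  -- bound each inner sum
  have hinner : ∀ xs : { j // j ≠ k } → X,
      |∑ a : X,
          (D a * ∏ j : { j // j ≠ k }, D (xs j)) *
          (u * ∑ r : Fin l → Bool,
            ((if f a then (1:ℝ) else 0) - (if f' a then (1:ℝ) else 0)) *
            ((if T (Function.update (XS xs) k a)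
                 (Function.update (fun i => g i (XS xs i)) k true) r then (1:ℝ) else 0) -
             (if T (Function.update (XS xs) k a)
                 (Function.update (fun i => g i (XS xs i)) k false) r then (1:ℝ) else 0)))|
        ≤ (∏ j : { j // j ≠ k }, D (xs j)) * (u * ((2:ℝ)^l * (4 * δ))) := by
    intro xs
    set W : ℝ := ∏ j : { j // j ≠ k }, D (xs j) with hW
    have hW0 : 0 ≤ W := Finset.prod_nonneg fun j _ => hD0 _
    -- reorganize: pull W and u out, swap sums
    have hre : ∑ a : X,
          (D a * W) *
          (u * ∑ r : Fin l → Bool,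
            ((if f a then (1:ℝ) else 0) - (if f' a then (1:ℝ) else 0)) *
            ((if T (Function.update (XS xs) k a)
                 (Function.update (fun i => g i (XS xs i)) k true) r then (1:ℝ) else 0) -
             (if T (Function.update (XS xs) k a)
                 (Function.update (fun i => g i (XS xs i)) k false) r then (1:ℝ) else 0)))
        = W * (u * ∑ r : Fin l → Bool, ∑ a : X,
            D a * (((if f a then (1:ℝ) else 0) - (if f' a then (1:ℝ) else 0)) *
            ((if T (Function.update (XS xs) k a)
                 (Function.update (fun i => g i (XS xs i)) k true) r then (1:ℝ) else 0) -
             (if T (Function.update (XS xs) k a)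
                 (Function.update (fun i => g i (XS xs i)) k false) r then (1:ℝ) else 0)))) := by
      simp only [Finset.mul_sum]
      rw [Finset.sum_comm]
      exact Finset.sum_congr rfl fun a _ => Finset.sum_congr rfl fun r _ => by ring
    rw [hre]
    -- bound the inner expectation over a for each seed r
    have hIr : ∀ r : Fin l → Bool,
        |∑ a : X,
            D a * (((if f a then (1:ℝ) else 0) - (if f' a then (1:ℝ) else 0)) *
            ((if T (Function.update (XS xs) k a)
                 (Function.update (fun i => g i (XS xs i)) k true) r then (1:ℝ) else 0) -
             (if T (Function.update (XS xs) k a)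
                 (Function.update (fun i => g i (XS xs i)) k false) r then (1:ℝ) else 0)))|
          ≤ 4 * δ := by
      intro r
      have h1 := hregf k (XS xs) (Function.update (fun i => g i (XS xs i)) k true) r
      have h2 := hregf k (XS xs) (Function.update (fun i => g i (XS xs i)) k false) r
      have h3 := hregf' k (XS xs) (Function.update (fun i => g i (XS xs i)) k true) r
      have h4 := hregf' k (XS xs) (Function.update (fun i => g i (XS xs i)) k false) r
      have hsum : ∑ a : X,
            D a * (((if f a then (1:ℝ) else 0) - (if f' a then (1:ℝ) else 0)) *
            ((if T (Function.update (XS xs) k a)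
                 (Function.update (fun i => g i (XS xs i)) k true) r then (1:ℝ) else 0) -
             (if T (Function.update (XS xs) k a)
                 (Function.update (fun i => g i (XS xs i)) k false) r then (1:ℝ) else 0)))
          = (∑ a : X, D a * ((if T (Function.update (XS xs) k a)
                 (Function.update (fun i => g i (XS xs i)) k true) r then (1:ℝ) else 0) *
                ((if f a then (1:ℝ) else 0) - ftil a)))
            - (∑ a : X, D a * ((if T (Function.update (XS xs) k a)
                 (Function.update (fun i => g i (XS xs i)) k false) r then (1:ℝ) else 0) *
                ((if f a then (1:ℝ) else 0) - ftil a)))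
            - (∑ a : X, D a * ((if T (Function.update (XS xs) k a)
                 (Function.update (fun i => g i (XS xs i)) k true) r then (1:ℝ) else 0) *
                ((if f' a then (1:ℝ) else 0) - ftil a)))
            + (∑ a : X, D a * ((if T (Function.update (XS xs) k a)
                 (Function.update (fun i => g i (XS xs i)) k false) r then (1:ℝ) else 0) *
                ((if f' a then (1:ℝ) else 0) - ftil a))) := by
        rw [← Finset.sum_sub_distrib, ← Finset.sum_sub_distrib, ← Finset.sum_add_distrib]
        exact Finset.sum_congr rfl fun a _ => by ring
      rw [hsum]
      rw [abs_le] at h1 h2 h3 h4 ⊢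
      constructor <;> linarith [h1.1, h1.2, h2.1, h2.2, h3.1, h3.2, h4.1, h4.2]
    rw [abs_mul, abs_mul, abs_of_nonneg hW0, abs_of_nonneg hu0]
    refine mul_le_mul_of_nonneg_left (mul_le_mul_of_nonneg_left ?_ hu0) hW0
    calc |∑ r : Fin l → Bool, ∑ a : X,
            D a * (((if f a then (1:ℝ) else 0) - (if f' a then (1:ℝ) else 0)) *
            ((if T (Function.update (XS xs) k a)
                 (Function.update (fun i => g i (XS xs i)) k true) r then (1:ℝ) else 0) -
             (if T (Function.update (XS xs) k a)
                 (Function.update (fun i => g i (XS xs i)) k false) r then (1:ℝ) else 0)))|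
        ≤ ∑ r : Fin l → Bool, |∑ a : X,
            D a * (((if f a then (1:ℝ) else 0) - (if f' a then (1:ℝ) else 0)) *
            ((if T (Function.update (XS xs) k a)
                 (Function.update (fun i => g i (XS xs i)) k true) r then (1:ℝ) else 0) -
             (if T (Function.update (XS xs) k a)
                 (Function.update (fun i => g i (XS xs i)) k false) r then (1:ℝ) else 0)))| :=
          Finset.abs_sum_le_sum_abs _ _
      _ ≤ ∑ _r : Fin l → Bool, 4 * δ := Finset.sum_le_sum fun r _ => hIr r
      _ = (2:ℝ)^l * (4 * δ) := by
          rw [Finset.sum_const, Finset.card_univ]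
          simp [Fintype.card_fun, mul_comm]
  -- sum the bounds
  calc |∑ xs : { j // j ≠ k } → X, ∑ a : X,
          (D a * ∏ j : { j // j ≠ k }, D (xs j)) *
          (u * ∑ r : Fin l → Bool,
            ((if f a then (1:ℝ) else 0) - (if f' a then (1:ℝ) else 0)) *
            ((if T (Function.update (XS xs) k a)
                 (Function.update (fun i => g i (XS xs i)) k true) r then (1:ℝ) else 0) -
             (if T (Function.update (XS xs) k a)
                 (Function.update (fun i => g i (XS xs i)) k false) r then (1:ℝ) else 0)))|
      ≤ ∑ xs : { j // j ≠ k } → X, |∑ a : X,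
          (D a * ∏ j : { j // j ≠ k }, D (xs j)) *
          (u * ∑ r : Fin l → Bool,
            ((if f a then (1:ℝ) else 0) - (if f' a then (1:ℝ) else 0)) *
            ((if T (Function.update (XS xs) k a)
                 (Function.update (fun i => g i (XS xs i)) k true) r then (1:ℝ) else 0) -
             (if T (Function.update (XS xs) k a)
                 (Function.update (fun i => g i (XS xs i)) k false) r then (1:ℝ) else 0)))| :=
        Finset.abs_sum_le_sum_abs _ _
    _ ≤ ∑ xs : { j // j ≠ k } → X,
          (∏ j : { j // j ≠ k }, D (xs j)) * (u * ((2:ℝ)^l * (4 * δ))) :=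
        Finset.sum_le_sum fun xs _ => hinner xs
    _ = (∑ xs : { j // j ≠ k } → X, ∏ j : { j // j ≠ k }, D (xs j)) *
          (u * ((2:ℝ)^l * (4 * δ))) := by rw [← Finset.sum_mul]
    _ = 4 * δ := by
        have hWsum : (∑ xs : { j // j ≠ k } → X, ∏ j : { j // j ≠ k }, D (xs j)) = 1 := by
          rw [← Fintype.prod_sum (fun (_ : { j // j ≠ k }) (a : X) => D a)]
          simp [hD1]
        rw [hWsum, one_mul, hu]
        have : (2:ℝ)^l ≠ 0 := by positivity
        field_simp

/-- If `f̃ : X → [0,1]` fools every one-way restriction of the Boolean tester `T`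
against both `f` and `f'` up to error `δ` under the distribution `D`, then the
acceptance probabilities of `T` on samples labeled deterministically by `f` and by `f'`
(with i.i.d. `D`-samples and a uniform seed) differ by at most `4 m δ`. -/
theorem stmt_8 {X : Type*} [Fintype X] [DecidableEq X] [Nonempty X]
    (m l : ℕ)
    (D : X → ℝ) (hD0 : ∀ x, 0 ≤ D x) (hD1 : ∑ x, D x = 1)
    (δ : ℝ) (hδ : 0 < δ)
    (T : (Fin m → X) → (Fin m → Bool) → (Fin l → Bool) → Bool)
    (f f' : X → Bool) (ftil : X → ℝ) (hftil : ∀ x, ftil x ∈ Set.Icc (0 : ℝ) 1)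
    (hregf : ∀ (i : Fin m) (xs : Fin m → X) (y : Fin m → Bool) (r : Fin l → Bool),
      |∑ x, D x * ((if T (Function.update xs i x) y r then (1 : ℝ) else 0) *
        ((if f x then (1 : ℝ) else 0) - ftil x))| ≤ δ)
    (hregf' : ∀ (i : Fin m) (xs : Fin m → X) (y : Fin m → Bool) (r : Fin l → Bool),
      |∑ x, D x * ((if T (Function.update xs i x) y r then (1 : ℝ) else 0) *
        ((if f' x then (1 : ℝ) else 0) - ftil x))| ≤ δ) :
    |(∑ x : Fin m → X, (∏ i, D (x i)) *
        (((1 : ℝ) / 2 ^ l) * ∑ r : Fin l → Bool,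
          (if T x (fun i => f (x i)) r then (1 : ℝ) else 0))) -
      (∑ x : Fin m → X, (∏ i, D (x i)) *
        (((1 : ℝ) / 2 ^ l) * ∑ r : Fin l → Bool,
          (if T x (fun i => f' (x i)) r then (1 : ℝ) else 0)))| ≤ 4 * m * δ := by
  classical
  -- hybrid labelings
  set G : ℕ → Fin m → X → Bool := fun t i x => if (i : ℕ) < t then f' x else f x with hG
  set A : ℕ → ℝ := fun t => ∑ x : Fin m → X, (∏ i, D (x i)) *
      (((1 : ℝ) / 2 ^ l) * ∑ r : Fin l → Bool,
        (if T x (fun i => G t i (x i)) r then (1 : ℝ) else 0)) with hA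
  have hA0 : A 0 = ∑ x : Fin m → X, (∏ i, D (x i)) *
      (((1 : ℝ) / 2 ^ l) * ∑ r : Fin l → Bool,
        (if T x (fun i => f (x i)) r then (1 : ℝ) else 0)) := by
    simp [hA, hG]
  have hAm : A m = ∑ x : Fin m → X, (∏ i, D (x i)) *
      (((1 : ℝ) / 2 ^ l) * ∑ r : Fin l → Bool,
        (if T x (fun i => f' (x i)) r then (1 : ℝ) else 0)) := by
    have hfun : ∀ x : Fin m → X, (fun i => G m i (x i)) = fun i => f' (x i) := by
      intro x; funext i; simp [hG, i.isLt]
    simp only [hA, hfun]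
  rw [← hA0, ← hAm]
  have htel : A 0 - A m = ∑ k ∈ Finset.range m, (A k - A (k + 1)) :=
    (Finset.sum_range_sub' A m).symm
  rw [htel]
  calc |∑ k ∈ Finset.range m, (A k - A (k + 1))|
      ≤ ∑ k ∈ Finset.range m, |A k - A (k + 1)| := Finset.abs_sum_le_sum_abs _ _
    _ ≤ ∑ _k ∈ Finset.range m, 4 * δ := by
        apply Finset.sum_le_sum
        intro k hk
        have hkm : k < m := Finset.mem_range.mp hk
        have hgg : ∀ j, j ≠ (⟨k, hkm⟩ : Fin m) → G k j = G (k + 1) j := by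
          intro j hj
          have hjk : (j : ℕ) ≠ k := by
            intro h; exact hj (Fin.ext h)
          funext x
          simp only [hG]
          have : ((j : ℕ) < k) ↔ ((j : ℕ) < k + 1) := by omega
          by_cases h : (j : ℕ) < k
          · rw [if_pos h, if_pos (this.mp h)]
          · rw [if_neg h, if_neg (fun h' => h (this.mpr h'))]
        have hgk : G k (⟨k, hkm⟩ : Fin m) = f := by
          funext x; simp [hG]
        have hg'k : G (k + 1) (⟨k, hkm⟩ : Fin m) = f' := by
          funext x; simp [hG]
        exact key_step m l D hD0 hD1 δ T f f' ftil hregf hregf'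
          (⟨k, hkm⟩ : Fin m) (G k) (G (k + 1)) hgg hgk hg'k
    _ = 4 * m * δ := by
        rw [Finset.sum_const, Finset.card_range]
        push_cast
        ring
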